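/- Fix an integer m ≥ 1 and positive reals σ_1², …, σ_n². Let G^r be any reduced set for (σ_1², …, σ_n², m) with |G^r| ≥ 2m, and let L ⊆ G^r with |L| = 2m be a set of indices attaining the 2m largest values of σ_i² among i ∈ G^r. Then (1 − (∑_{i∈L} σ_i²) / (∑_{j∈G^r} σ_j²)) · ln(m) ≤ 4 · Ent(σ²_L). -/

import Mathlib

/-!
Let `μ` be the smallest weight on `L` and `S = ∑_{i∈L} σ_i`. Every index of `G^r \ L` has weight
at most `μ`, so it lies in `μ`'s group or a lower one; each group contributes at most `2m` indices,
bounded by `μ` in the top group and by the geometric sequence `σ̲² 2^j` below it, so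
`∑_{G^r \ L} σ_i ≤ 6 m μ` and `1 - S / ∑_{G^r} σ_j ≤ 6 m μ / S`. On the other side, the `r`-th
largest weight of `L` is at most `S / r`, so its entropy term `p log (1/p)` is at least
`(μ / S) log r`, whence `Ent(σ²_L) ≥ (μ / S) log (2m)!`. Finally `((2m)!)² ≥ m^{3m}` gives
`log (2m)! ≥ (3/2) m log m`.
-/

open Finset Real
open scoped Classical

/-- Entropy-like function `Ent(a_S) = -∑_{i∈S} (a_i/A) ln (a_i/A)` with `A = ∑_{j∈S} a_j`. -/
noncomputable def ent {ι : Type*} (S : Finset ι) (a : ι → ℝ) : ℝ :=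
  -∑ i ∈ S, (a i / ∑ j ∈ S, a j) * Real.log (a i / ∑ j ∈ S, a j)

/-- The minimum variance `σ̲² = min_{i∈[n]} σ_i²`. -/
noncomputable def sigMin (n : ℕ) [NeZero n] (σ : Fin n → ℝ) : ℝ :=
  Finset.univ.inf' Finset.univ_nonempty σ

/-- The `j`-th variance group `G_j = {i ∈ [n] : 2^{j-1} ≤ σ_i²/σ̲² < 2^j}` (for `j ≥ 1`). -/
noncomputable def grp (n : ℕ) [NeZero n] (σ : Fin n → ℝ) (j : ℕ) : Finset (Fin n) :=
  Finset.univ.filter fun i =>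
    (2 : ℝ) ^ (j - 1) ≤ σ i / sigMin n σ ∧ σ i / sigMin n σ < 2 ^ j

/-- `Gr` is a reduced set for `(σ², m)`: `Gr = ∪_j G'_j` where `G'_j = G_j` when
`|G_j| ≤ 2m`, and `G'_j` is an arbitrary `2m`-element subset of `G_j` otherwise. -/
def IsReducedSet (n : ℕ) [NeZero n] (m : ℕ) (σ : Fin n → ℝ) (Gr : Finset (Fin n)) : Prop :=
  ∃ G' : ℕ → Finset (Fin n),
    (∀ j : ℕ, 1 ≤ j →
      ((grp n σ j).card ≤ 2 * m → G' j = grp n σ j) ∧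
      (2 * m < (grp n σ j).card → G' j ⊆ grp n σ j ∧ (G' j).card = 2 * m)) ∧
    (Gr : Set (Fin n)) = ⋃ (j : ℕ) (_ : 1 ≤ j), (G' j : Set (Fin n))

open scoped Nat

theorem Nat.pow_self_le_factorial_sq (m : ℕ) : m ^ m ≤ (m !) ^ 2 := by
  calc m ^ m = ∏ _k ∈ range m, m := by rw [prod_const, card_range]
    _ ≤ ∏ k ∈ range m, (k + 1) * (m - k) := by
        refine prod_le_prod' fun k hk => ?_
        have hk : k < m := mem_range.1 hk
        nlinarith [Nat.sub_add_cancel hk.le]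
    _ = (m !) ^ 2 := by
        rw [prod_mul_distrib, ← Nat.factorial_eq_prod_range_add_one,
          ← Nat.descFactorial_eq_prod_range, Nat.descFactorial_self, sq]

theorem Nat.pow_three_mul_le_factorial_two_mul_sq (m : ℕ) : m ^ (3 * m) ≤ ((2 * m)!) ^ 2 :=
  calc m ^ (3 * m) = m ^ m * (m ^ m) ^ 2 := by ring
    _ ≤ (m !) ^ 2 * ((m + 1) ^ m) ^ 2 := by
        gcongr ?_ * (?_ ^ m) ^ 2
        · exact Nat.pow_self_le_factorial_sq m
        · omega
    _ = (m ! * (m + 1) ^ m) ^ 2 := by ring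
    _ ≤ ((2 * m)!) ^ 2 := by
        gcongr
        rw [two_mul]
        exact Nat.factorial_mul_pow_le_factorial

theorem three_halves_mul_log_le_log_factorial (m : ℕ) :
    3 / 2 * m * Real.log m ≤ Real.log ((2 * m)! : ℝ) := by
  rcases Nat.eq_zero_or_pos m with rfl | hm
  · simp
  have h : Real.log ((m : ℝ) ^ (3 * m)) ≤ Real.log (((2 * m)! : ℝ) ^ 2) :=
    Real.log_le_log (by positivity) (by exact_mod_cast Nat.pow_three_mul_le_factorial_two_mul_sq m)
  rw [Real.log_pow, Real.log_pow] at h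
  push_cast at h
  linarith

theorem Finset.factorial_card_le_prod_card_filter_le {ι α : Type*} [LinearOrder α] (f : ι → α)
    (s : Finset ι) : (#s)! ≤ ∏ i ∈ s, #{k ∈ s | f i ≤ f k} := by
  induction s using Finset.induction_on_min_value f with
  | empty => simp
  | insert a s ha hmin ih =>
    have hfilter : {k ∈ insert a s | f a ≤ f k} = insert a s :=
      filter_true_of_mem fun k hk => (mem_insert.1 hk).elim (fun h => h ▸ le_rfl) (hmin k)
    rw [card_insert_of_notMem ha, prod_insert ha, Nat.factorial_succ, hfilter,
      card_insert_of_notMem ha]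
    gcongr
    exact ih.trans <| prod_le_prod' fun i _ =>
      card_le_card <| filter_subset_filter _ (subset_insert a s)

theorem mul_log_factorial_card_le_ent {ι : Type*} {L : Finset ι} {a : ι → ℝ}
    (ha : ∀ i ∈ L, 0 < a i) {μ : ℝ} (hμ : 0 ≤ μ) (hμa : ∀ i ∈ L, μ ≤ a i) :
    μ / (∑ i ∈ L, a i) * Real.log (#L)! ≤ ent L a := by
  set S := ∑ i ∈ L, a i
  have hrank_pos : ∀ i ∈ L, 0 < #{k ∈ L | a i ≤ a k} := fun i hi =>
    card_pos.2 ⟨i, mem_filter.2 ⟨hi, le_rfl⟩⟩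
  have hlog : Real.log (#L)! ≤ ∑ i ∈ L, Real.log #{k ∈ L | a i ≤ a k} := by
    rw [← Real.log_prod fun i hi => by exact_mod_cast (hrank_pos i hi).ne', ← Nat.cast_prod]
    exact Real.log_le_log (by positivity)
      (by exact_mod_cast L.factorial_card_le_prod_card_filter_le a)
  have hterm : ∀ i ∈ L,
      μ / S * Real.log #{k ∈ L | a i ≤ a k} ≤ -(a i / S * Real.log (a i / S)) := by
    intro i hi
    have hS : 0 < S := (ha i hi).trans_le (single_le_sum (fun k hk => (ha k hk).le) hi)
    have hrank : (#{k ∈ L | a i ≤ a k} : ℝ) * a i ≤ S := by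
      calc (#{k ∈ L | a i ≤ a k} : ℝ) * a i = ∑ k ∈ L with a i ≤ a k, a i := by
            rw [sum_const, nsmul_eq_mul]
        _ ≤ ∑ k ∈ L with a i ≤ a k, a k := sum_le_sum fun k hk => (mem_filter.1 hk).2
        _ ≤ S := sum_le_sum_of_subset_of_nonneg (filter_subset _ _) fun k hk _ => (ha k hk).le
    calc μ / S * Real.log #{k ∈ L | a i ≤ a k}
        ≤ a i / S * Real.log #{k ∈ L | a i ≤ a k} := by
          gcongr
          exact hμa i hi
      _ ≤ a i / S * Real.log (S / a i) := by
          gcongr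
          · exact (div_pos (ha i hi) hS).le
          · exact_mod_cast hrank_pos i hi
          · rwa [le_div_iff₀ (ha i hi)]
      _ = -(a i / S * Real.log (a i / S)) := by rw [← inv_div, Real.log_inv]; ring
  calc μ / S * Real.log (#L)! ≤ μ / S * ∑ i ∈ L, Real.log #{k ∈ L | a i ≤ a k} := by
        gcongr
        exact div_nonneg hμ (sum_nonneg fun i hi => (ha i hi).le)
    _ ≤ ∑ i ∈ L, -(a i / S * Real.log (a i / S)) := by rw [mul_sum]; exact sum_le_sum hterm
    _ = ent L a := by rw [ent, sum_neg_distrib]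

theorem sum_range_min_mul_two_pow_le {s x : ℝ} (hs : 0 ≤ s) {J : ℕ} (hJ : s * 2 ^ (J - 1) ≤ x) :
    ∑ j ∈ range (J + 1), min x (s * 2 ^ j) ≤ 3 * x := by
  have hgeom : ∑ j ∈ range J, min x (s * 2 ^ j) ≤ s * 2 ^ J :=
    calc ∑ j ∈ range J, min x (s * 2 ^ j) ≤ ∑ j ∈ range J, s * 2 ^ j :=
          sum_le_sum fun j _ => min_le_right _ _
      _ = s * (2 ^ J - 1) := by rw [← mul_sum, geom_sum_eq (by norm_num)]; ring
      _ ≤ s * 2 ^ J := by nlinarith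
  have htop : s * 2 ^ J ≤ 2 * x := by
    rcases J with _ | J
    · simp only [zero_tsub, pow_zero, mul_one] at hJ ⊢; linarith
    · rw [pow_succ]; simp only [add_tsub_cancel_right] at hJ; linarith
  rw [sum_range_succ]
  linarith [min_le_left x (s * 2 ^ J)]

section Groups

variable {n : ℕ} [NeZero n] {σ : Fin n → ℝ}

theorem sigMin_pos (hσ : ∀ i, 0 < σ i) : 0 < sigMin n σ :=
  (lt_inf'_iff _).2 fun i _ => hσ i

theorem sigMin_mul_pow_le_of_mem_grp (hσ : ∀ i, 0 < σ i) {i : Fin n} {j : ℕ}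
    (hi : i ∈ grp n σ j) : sigMin n σ * 2 ^ (j - 1) ≤ σ i := by
  rw [mul_comm, ← le_div_iff₀ (sigMin_pos hσ)]
  exact (mem_filter.1 hi).2.1

theorem lt_sigMin_mul_pow_of_mem_grp (hσ : ∀ i, 0 < σ i) {i : Fin n} {j : ℕ}
    (hi : i ∈ grp n σ j) : σ i < sigMin n σ * 2 ^ j := by
  rw [mul_comm, ← div_lt_iff₀ (sigMin_pos hσ)]
  exact (mem_filter.1 hi).2.2

theorem le_of_mem_grp_of_le (hσ : ∀ i, 0 < σ i) {i k : Fin n} {j l : ℕ}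
    (hi : i ∈ grp n σ j) (hk : k ∈ grp n σ l) (hik : σ i ≤ σ k) : j ≤ l := by
  have h : sigMin n σ * 2 ^ (j - 1) < sigMin n σ * 2 ^ l :=
    (sigMin_mul_pow_le_of_mem_grp hσ hi).trans_lt
      (hik.trans_lt (lt_sigMin_mul_pow_of_mem_grp hσ hk))
  have := (pow_lt_pow_iff_right₀ (one_lt_two : (1 : ℝ) < 2)).1
    (lt_of_mul_lt_mul_left h (sigMin_pos hσ).le)
  omega

theorem IsReducedSet.exists_cover {m : ℕ} {Gr : Finset (Fin n)} (h : IsReducedSet n m σ Gr) :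
    ∃ G' : ℕ → Finset (Fin n), (∀ j, G' j ⊆ grp n σ j ∧ #(G' j) ≤ 2 * m) ∧
      ∀ i ∈ Gr, ∃ j, i ∈ G' j := by
  obtain ⟨G', hG', hGr⟩ := h
  refine ⟨fun j => if j = 0 then ∅ else G' j, fun j => ?_, fun i hi => ?_⟩
  · dsimp only
    split_ifs with hj
    · simp
    · have hj : 1 ≤ j := Nat.one_le_iff_ne_zero.2 hj
      rcases le_or_gt #(grp n σ j) (2 * m) with hle | hgt
      · rw [(hG' j hj).1 hle]; exact ⟨subset_rfl, hle⟩
      · exact ⟨((hG' j hj).2 hgt).1, ((hG' j hj).2 hgt).2.le⟩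
  · have hi : i ∈ (Gr : Set (Fin n)) := hi
    simp only [hGr, Set.mem_iUnion, mem_coe] at hi
    obtain ⟨j, hj, hij⟩ := hi
    exact ⟨j, by dsimp only; rwa [if_neg (by omega)]⟩

theorem sum_le_six_mul_of_forall_le (hσ : ∀ i, 0 < σ i) {m : ℕ} {G' : ℕ → Finset (Fin n)}
    (hG' : ∀ j, G' j ⊆ grp n σ j ∧ #(G' j) ≤ 2 * m) {U : Finset (Fin n)}
    (hU : ∀ c ∈ U, ∃ j, c ∈ G' j) {i₀ : Fin n} {j₀ : ℕ} (hi₀ : i₀ ∈ grp n σ j₀)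
    (hle : ∀ c ∈ U, σ c ≤ σ i₀) : ∑ c ∈ U, σ c ≤ 6 * m * σ i₀ := by
  set s := sigMin n σ
  have hcover : ∀ c ∈ U, σ c ≤ ∑ j ∈ range (j₀ + 1), if c ∈ G' j then σ c else 0 := by
    intro c hc
    obtain ⟨j, hj⟩ := hU c hc
    have hjj₀ : j ≤ j₀ := le_of_mem_grp_of_le hσ ((hG' j).1 hj) hi₀ (hle c hc)
    simpa [hj] using single_le_sum (f := fun j => if c ∈ G' j then σ c else 0)
      (fun j _ => ite_nonneg (hσ c).le le_rfl) (mem_range.2 (Nat.lt_succ_of_le hjj₀))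
  have hgroup : ∀ j, ∑ c ∈ U with c ∈ G' j, σ c ≤ 2 * m * min (σ i₀) (s * 2 ^ j) := by
    intro j
    calc ∑ c ∈ U with c ∈ G' j, σ c ≤ #{c ∈ U | c ∈ G' j} • min (σ i₀) (s * 2 ^ j) :=
          sum_le_card_nsmul _ _ _ fun c hc => le_min (hle c (mem_filter.1 hc).1)
            (lt_sigMin_mul_pow_of_mem_grp hσ ((hG' j).1 (mem_filter.1 hc).2)).le
      _ ≤ (2 * m : ℕ) • min (σ i₀) (s * 2 ^ j) := by
          gcongr
          · exact le_min (hσ i₀).le (mul_nonneg (sigMin_pos hσ).le (by positivity))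
          · exact (card_le_card fun c hc => (mem_filter.1 hc).2).trans (hG' j).2
      _ = 2 * m * min (σ i₀) (s * 2 ^ j) := by rw [nsmul_eq_mul]; push_cast; ring
  calc ∑ c ∈ U, σ c ≤ ∑ c ∈ U, ∑ j ∈ range (j₀ + 1), if c ∈ G' j then σ c else 0 :=
        sum_le_sum hcover
    _ = ∑ j ∈ range (j₀ + 1), ∑ c ∈ U with c ∈ G' j, σ c := by rw [sum_comm]; simp only [sum_filter]
    _ ≤ ∑ j ∈ range (j₀ + 1), 2 * m * min (σ i₀) (s * 2 ^ j) := sum_le_sum fun j _ => hgroup j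
    _ = 2 * m * ∑ j ∈ range (j₀ + 1), min (σ i₀) (s * 2 ^ j) := by rw [mul_sum]
    _ ≤ 2 * m * (3 * σ i₀) := by
        gcongr
        exact sum_range_min_mul_two_pow_le (sigMin_pos hσ).le (sigMin_mul_pow_le_of_mem_grp hσ hi₀)
    _ = 6 * m * σ i₀ := by ring

end Groups

theorem stmt_11_general (n m : ℕ) [NeZero n] (hm : 1 ≤ m)
    (σ : Fin n → ℝ) (hσ : ∀ i, 0 < σ i)
    (Gr : Finset (Fin n)) (hGr : IsReducedSet n m σ Gr)
    (L : Finset (Fin n)) (hLsub : L ⊆ Gr) (hLcard : L.card = 2 * m)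
    (hLtop : ∀ i ∈ L, ∀ j ∈ Gr \ L, σ j ≤ σ i) :
    (1 - (∑ i ∈ L, σ i) / (∑ j ∈ Gr, σ j)) * Real.log m ≤ 4 * ent L σ := by
  obtain ⟨G', hG', hcover⟩ := hGr.exists_cover
  obtain ⟨i₀, hi₀, hmin⟩ := L.exists_min_image σ (card_pos.1 (by omega))
  obtain ⟨j₀, hj₀⟩ := hcover i₀ (hLsub hi₀)
  have hrest : ∑ c ∈ Gr \ L, σ c ≤ 6 * m * σ i₀ :=
    sum_le_six_mul_of_forall_le hσ hG' (fun c hc => hcover c (mem_sdiff.1 hc).1)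
      ((hG' j₀).1 hj₀) (hLtop i₀ hi₀)
  have hent := mul_log_factorial_card_le_ent (fun i _ => hσ i) (hσ i₀).le hmin
  rw [hLcard] at hent
  set S := ∑ i ∈ L, σ i
  have hS : 0 < S := sum_pos (fun i _ => hσ i) ⟨i₀, hi₀⟩
  have hrest₀ : 0 ≤ ∑ c ∈ Gr \ L, σ c := sum_nonneg fun i _ => (hσ i).le
  have hT : ∑ j ∈ Gr, σ j = ∑ c ∈ Gr \ L, σ c + S := (sum_sdiff hLsub).symm
  calc (1 - S / ∑ j ∈ Gr, σ j) * Real.log m ≤ (∑ c ∈ Gr \ L, σ c) / S * Real.log m := by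
        gcongr
        rw [hT, one_sub_div (by positivity), add_sub_cancel_right]
        gcongr
        exact le_add_of_nonneg_left hrest₀
    _ ≤ 6 * m * σ i₀ / S * Real.log m := by gcongr
    _ = 4 * (σ i₀ / S * (3 / 2 * m * Real.log m)) := by ring
    _ ≤ 4 * ent L σ := by
        gcongr
        exact (mul_le_mul_of_nonneg_left (three_halves_mul_log_le_log_factorial m)
          (div_nonneg (hσ i₀).le hS.le)).trans hent

/-- **Lemma.** For `m ≥ 1`, a reduced set `G^r` with `|G^r| ≥ 2m`, and `L ⊆ G^r` the
`2m` indices with the largest variances in `G^r`,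
`(1 - (∑_{i∈L} σ_i²)/(∑_{j∈G^r} σ_j²)) ln m ≤ 4 Ent(σ²_L)`. -/
theorem stmt_11 (n m : ℕ) [NeZero n] (hm : 1 ≤ m)
    (σ : Fin n → ℝ) (hσ : ∀ i, 0 < σ i)
    (Gr : Finset (Fin n)) (hGr : IsReducedSet n m σ Gr) (hGrcard : 2 * m ≤ Gr.card)
    (L : Finset (Fin n)) (hLsub : L ⊆ Gr) (hLcard : L.card = 2 * m)
    (hLtop : ∀ i ∈ L, ∀ j ∈ Gr \ L, σ j ≤ σ i) :
    (1 - (∑ i ∈ L, σ i) / (∑ j ∈ Gr, σ j)) * Real.log m ≤ 4 * ent L σ :=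
  stmt_11_general n m hm σ hσ Gr hGr L hLsub hLcard hLtop
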